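/- Limit of generalized Orlicz norms: Let Ω have finite measure, φ_n ∈ Φ_w(Ω), c, L ≥ 1, and p_n ≥ 1 with p_n → ∞. Assume for all n that 1/c ≤ φ_n(x,1) ≤ c for a.e. x, and φ_n satisfies (aInc)_{p_n} with constant L. Then for every u ∈ L^∞(Ω), lim_{n→∞} ‖u‖_{φ_n} = ‖u‖_{L^∞(Ω)}. -/

import Mathlib

open MeasureTheory Set Filter Topology ENNReal

/-- The modular `ρ_φ(f) = ∫_Ω φ(x,|f(x)|) dx` of a generalized Orlicz space. -/
noncomputable def gModular {N : ℕ} (Ω : Set (Fin N → ℝ))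
    (φ : (Fin N → ℝ) → ℝ → ℝ≥0∞) (f : (Fin N → ℝ) → ℝ) : ℝ≥0∞ :=
  ∫⁻ x in Ω, φ x |f x|

/-- The Luxemburg quasinorm `‖f‖_φ = inf{λ > 0 : ρ_φ(f/λ) ≤ 1}` (with value `∞` if no
such `λ` exists). -/
noncomputable def luxNorm {N : ℕ} (Ω : Set (Fin N → ℝ))
    (φ : (Fin N → ℝ) → ℝ → ℝ≥0∞) (f : (Fin N → ℝ) → ℝ) : ℝ≥0∞ :=
  sInf (ENNReal.ofReal '' {l : ℝ | 0 < l ∧ gModular Ω φ (fun x => f x / l) ≤ 1})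

/-- `φ` is a generalized weak Φ-function on `Ω`: measurability of `x ↦ φ(x,|f(x)|)`,
`φ(x,0) = 0`, `lim_{t→0⁺} φ(x,t) = 0`, `lim_{t→∞} φ(x,t) = ∞`, `t ↦ φ(x,t)` increasing,
and `(aInc)₁` with some constant `L ≥ 1`. -/
def IsWeakPhi {N : ℕ} (Ω : Set (Fin N → ℝ)) (φ : (Fin N → ℝ) → ℝ → ℝ≥0∞) : Prop :=
  (∀ f : (Fin N → ℝ) → ℝ, Measurable f → Measurable fun x => φ x |f x|) ∧
  (∀ᵐ x ∂(volume.restrict Ω),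
      φ x 0 = 0 ∧ Tendsto (φ x) (nhdsWithin 0 (Ioi 0)) (nhds 0) ∧
      Tendsto (φ x) atTop (nhds ⊤) ∧ MonotoneOn (φ x) (Ici 0)) ∧
  (∃ L : ℝ, 1 ≤ L ∧ ∀ᵐ x ∂(volume.restrict Ω), ∀ t, 0 ≤ t → ∀ l, 0 ≤ l → l ≤ 1 →
      φ x (l * t) ≤ ENNReal.ofReal (L * l) * φ x t)

/-!
If `λ > ‖u‖_∞`, then `|u|/λ ≤ θ < 1` a.e., and `(aInc)_{p_n}` together with `φ_n(x,1) ≤ c`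
bounds the modular of `u/λ` by `L c θ^{p_n} |Ω| → 0`; hence eventually `‖u‖_{φ_n} ≤ λ`.
If `λ < λ' < ‖u‖_∞`, the set `{|u| ≥ λ'}` has positive measure, and on it `(aInc)_{p_n}` used
in the other direction gives `φ_n(x, |u|/λ) ≥ (λ'/λ)^{p_n} / (cL) → ∞`; hence eventually the
modular of `u/λ` exceeds `1` and `‖u‖_{φ_n} ≥ λ`.
-/

/-- The condition `(aInc)_p` with constant `L`: `t ↦ φ(t) / t^p` is `L`-almost increasing. -/
def AInc (φ : ℝ → ℝ≥0∞) (p L : ℝ) : Prop :=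
  ∀ t, 0 ≤ t → ∀ l, 0 ≤ l → l ≤ 1 → φ (l * t) ≤ ENNReal.ofReal (L * l ^ p) * φ t

namespace AInc

variable {φ : ℝ → ℝ≥0∞} {p L : ℝ}

theorem apply_le_of_le (h : AInc φ p L) {c l θ : ℝ} (hφ1 : φ 1 ≤ ENNReal.ofReal c)
    (hp : 0 ≤ p) (hL : 0 ≤ L) (hl : 0 ≤ l) (hlθ : l ≤ θ) (hθ : θ ≤ 1) :
    φ l ≤ ENNReal.ofReal (L * θ ^ p * c) := by
  have hθ0 : 0 ≤ θ := hl.trans hlθ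
  calc φ l = φ (l * 1) := by rw [mul_one]
    _ ≤ ENNReal.ofReal (L * l ^ p) * φ 1 := h 1 zero_le_one l hl (hlθ.trans hθ)
    _ ≤ ENNReal.ofReal (L * θ ^ p) * ENNReal.ofReal c := by gcongr
    _ = ENNReal.ofReal (L * θ ^ p * c) := (ENNReal.ofReal_mul (by positivity)).symm

theorem rpow_div_le_apply (h : AInc φ p L) {c T : ℝ} (hφ1 : ENNReal.ofReal (1 / c) ≤ φ 1)
    (hc : 0 < c) (hL : 0 < L) (hT : 1 ≤ T) :
    ENNReal.ofReal (T ^ p / (c * L)) ≤ φ T := by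
  have hT0 : 0 < T := zero_lt_one.trans_le hT
  have hstep : φ 1 ≤ ENNReal.ofReal (L * T⁻¹ ^ p) * φ T := by
    simpa [inv_mul_cancel₀ hT0.ne'] using
      h T hT0.le T⁻¹ (by positivity) (inv_le_one_of_one_le₀ hT)
  calc ENNReal.ofReal (T ^ p / (c * L))
      = ENNReal.ofReal (T ^ p / L) * ENNReal.ofReal (1 / c) := by
        rw [← ENNReal.ofReal_mul (by positivity)]
        congr 1
        field_simp
    _ ≤ ENNReal.ofReal (T ^ p / L) * (ENNReal.ofReal (L * T⁻¹ ^ p) * φ T) := by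
        gcongr
        exact hφ1.trans hstep
    _ = φ T := by
        rw [← mul_assoc, ← ENNReal.ofReal_mul (by positivity), Real.inv_rpow hT0.le]
        field_simp
        simp

end AInc

section EssSup

variable {α : Type*} [MeasurableSpace α] {μ : Measure α} {u : α → ℝ} {a : ℝ}

theorem measure_le_abs_ne_zero_of_ofReal_lt_eLpNorm_top (h : ENNReal.ofReal a < eLpNorm u ⊤ μ) :
    μ {x | a ≤ |u x|} ≠ 0 := by
  intro h0
  refine h.not_ge ?_
  rw [eLpNorm_exponent_top]
  exact eLpNormEssSup_le_of_ae_bound (measure_mono_null (fun x (hx : ¬|u x| ≤ a) => (not_le.1 hx).le) h0)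

theorem ae_abs_le_of_eLpNorm_top_lt_ofReal (h : eLpNorm u ⊤ μ < ENNReal.ofReal a) :
    ∀ᵐ x ∂μ, |u x| ≤ a := by
  filter_upwards [ae_le_eLpNormEssSup (f := u) (μ := μ)] with x hx
  rw [← eLpNorm_exponent_top, Real.enorm_eq_ofReal_abs] at hx
  exact (ENNReal.ofReal_lt_ofReal_iff'.1 (hx.trans_lt h)).1.le

end EssSup

section Modular

variable {N : ℕ} {Ω : Set (Fin N → ℝ)} {φ : (Fin N → ℝ) → ℝ → ℝ≥0∞} {u : (Fin N → ℝ) → ℝ}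

theorem luxNorm_le_ofReal {l : ℝ} (hl : 0 < l) (h : gModular Ω φ (fun x => u x / l) ≤ 1) :
    luxNorm Ω φ u ≤ ENNReal.ofReal l :=
  sInf_le ⟨l, ⟨hl, h⟩, rfl⟩

theorem gModular_div_le_gModular_div
    (hmono : ∀ᵐ x ∂volume.restrict Ω, MonotoneOn (φ x) (Ici 0)) {l l' : ℝ} (hl : 0 < l)
    (hll' : l ≤ l') : gModular Ω φ (fun x => u x / l') ≤ gModular Ω φ (fun x => u x / l) := by
  refine lintegral_mono_ae ?_
  filter_upwards [hmono] with x hx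
  have hl' : 0 < l' := hl.trans_le hll'
  simp only [abs_div, abs_of_pos hl, abs_of_pos hl']
  exact hx (by simp only [mem_Ici]; positivity) (by simp only [mem_Ici]; positivity) (by gcongr)

theorem ofReal_le_luxNorm (hmono : ∀ᵐ x ∂volume.restrict Ω, MonotoneOn (φ x) (Ici 0)) {l : ℝ}
    (h : 1 < gModular Ω φ (fun x => u x / l)) : ENNReal.ofReal l ≤ luxNorm Ω φ u := by
  refine le_sInf ?_
  rintro _ ⟨l', ⟨hl', hmod⟩, rfl⟩
  refine ENNReal.ofReal_le_ofReal (le_of_not_gt fun hl'l => ?_)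
  exact (h.trans_le (gModular_div_le_gModular_div hmono hl' hl'l.le)).not_ge hmod

variable {p L c : ℝ}

theorem gModular_div_le_of_ae_abs_le (haInc : ∀ᵐ x ∂volume.restrict Ω, AInc (φ x) p L)
    (hφ1 : ∀ᵐ x ∂volume.restrict Ω, φ x 1 ≤ ENNReal.ofReal c) (hp : 0 ≤ p) (hL : 0 ≤ L)
    {a l : ℝ} (hu : ∀ᵐ x ∂volume.restrict Ω, |u x| ≤ a) (hal : a ≤ l) (hl : 0 < l) :
    gModular Ω φ (fun x => u x / l) ≤ ENNReal.ofReal (L * (a / l) ^ p * c) * volume Ω := by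
  rw [gModular, ← setLIntegral_const]
  refine lintegral_mono_ae ?_
  filter_upwards [haInc, hφ1, hu] with x hx hx1 hux
  rw [abs_div, abs_of_pos hl]
  exact hx.apply_le_of_le hx1 hp hL (by positivity) (by gcongr) ((div_le_one hl).2 hal)

theorem mul_measure_le_gModular_div
    (hmono : ∀ᵐ x ∂volume.restrict Ω, MonotoneOn (φ x) (Ici 0))
    (haInc : ∀ᵐ x ∂volume.restrict Ω, AInc (φ x) p L)
    (hφ1 : ∀ᵐ x ∂volume.restrict Ω, ENNReal.ofReal (1 / c) ≤ φ x 1) (hc : 0 < c) (hL : 0 < L)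
    (hu : Measurable u) {a l : ℝ} (hl : 0 < l) (hla : l ≤ a) :
    ENNReal.ofReal ((a / l) ^ p / (c * L)) * volume.restrict Ω {x | a ≤ |u x|} ≤
      gModular Ω φ (fun x => u x / l) := by
  rw [gModular, ← lintegral_indicator_const (measurableSet_le measurable_const hu.abs)]
  refine lintegral_mono_ae ?_
  filter_upwards [hmono, haInc, hφ1] with x hxmono hx hx1
  by_cases hxa : a ≤ |u x|
  · rw [indicator_of_mem (show x ∈ {x | a ≤ |u x|} from hxa), abs_div, abs_of_pos hl]
    have hT : 1 ≤ a / l := (one_le_div hl).2 hla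
    refine (hx.rpow_div_le_apply hx1 hc hL hT).trans ?_
    exact hxmono (zero_le_one.trans hT) (by simp only [mem_Ici]; positivity) (by gcongr)
  · rw [indicator_of_notMem (show x ∉ {x | a ≤ |u x|} from hxa)]
    exact zero_le

variable {φ : ℕ → (Fin N → ℝ) → ℝ → ℝ≥0∞} {p : ℕ → ℝ}

theorem eventually_luxNorm_lt (hΩ : volume Ω < ⊤) (hL : 0 ≤ L) (hptop : Tendsto p atTop atTop)
    (haInc : ∀ n, ∀ᵐ x ∂volume.restrict Ω, AInc (φ n x) (p n) L)
    (hφ1 : ∀ n, ∀ᵐ x ∂volume.restrict Ω, φ n x 1 ≤ ENNReal.ofReal c)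
    {b : ℝ≥0∞} (hb : eLpNorm u ⊤ (volume.restrict Ω) < b) :
    ∀ᶠ n in atTop, luxNorm Ω (φ n) u < b := by
  obtain ⟨l, -, hul, hlb⟩ := ENNReal.lt_iff_exists_real_btwn.1 hb
  obtain ⟨a, ha, hua, hal⟩ := ENNReal.lt_iff_exists_real_btwn.1 hul
  have hal' : a < l := (ENNReal.ofReal_lt_ofReal_iff'.1 hal).1
  have hl : 0 < l := ha.trans_lt hal'
  have hsmall : Tendsto (fun n => ENNReal.ofReal (L * (a / l) ^ p n * c) * volume Ω) atTop
      (𝓝 0) := by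
    have hθ : Tendsto (fun n => L * (a / l) ^ p n * c) atTop (𝓝 0) := by
      simpa using (((tendsto_rpow_atTop_of_base_lt_one _ (by linarith [div_nonneg ha hl.le])
        ((div_lt_one hl).2 hal')).comp hptop).const_mul L).mul_const c
    simpa using ENNReal.Tendsto.mul_const (ENNReal.tendsto_ofReal hθ) (Or.inr hΩ.ne)
  filter_upwards [hsmall.eventually (gt_mem_nhds zero_lt_one), hptop.eventually_ge_atTop 0]
    with n hn hpn
  refine (luxNorm_le_ofReal hl ?_).trans_lt hlb
  exact (gModular_div_le_of_ae_abs_le (haInc n) (hφ1 n) hpn hL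
    (ae_abs_le_of_eLpNorm_top_lt_ofReal hua) hal'.le hl).trans hn.le

theorem eventually_lt_luxNorm (hmono : ∀ n, ∀ᵐ x ∂volume.restrict Ω, MonotoneOn (φ n x) (Ici 0))
    (hc : 0 < c) (hL : 0 < L) (hptop : Tendsto p atTop atTop)
    (haInc : ∀ n, ∀ᵐ x ∂volume.restrict Ω, AInc (φ n x) (p n) L)
    (hφ1 : ∀ n, ∀ᵐ x ∂volume.restrict Ω, ENNReal.ofReal (1 / c) ≤ φ n x 1)
    (hu : Measurable u) {b : ℝ≥0∞} (hb : b < eLpNorm u ⊤ (volume.restrict Ω)) :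
    ∀ᶠ n in atTop, b < luxNorm Ω (φ n) u := by
  obtain ⟨l, -, hbl, hlu⟩ := ENNReal.lt_iff_exists_real_btwn.1 hb
  obtain ⟨a, -, hla, hau⟩ := ENNReal.lt_iff_exists_real_btwn.1 hlu
  have hl : 0 < l := ENNReal.ofReal_pos.1 (zero_le.trans_lt hbl)
  have hla' : l < a := (ENNReal.ofReal_lt_ofReal_iff'.1 hla).1
  have hlarge : Tendsto (fun n => ENNReal.ofReal ((a / l) ^ p n / (c * L)) *
      volume.restrict Ω {x | a ≤ |u x|}) atTop (𝓝 ⊤) := by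
    have hT : Tendsto (fun n => (a / l) ^ p n / (c * L)) atTop atTop :=
      ((tendsto_rpow_atTop_of_base_gt_one _ ((one_lt_div hl).2 hla')).comp hptop).atTop_div_const
        (by positivity)
    simpa [top_mul (measure_le_abs_ne_zero_of_ofReal_lt_eLpNorm_top hau)] using
      ENNReal.Tendsto.mul_const (b := volume.restrict Ω {x | a ≤ |u x|})
        (ENNReal.tendsto_ofReal_atTop.comp hT) (Or.inl top_ne_zero)
  filter_upwards [hlarge.eventually (lt_mem_nhds one_lt_top)] with n hn
  exact hbl.trans_le (ofReal_le_luxNorm (hmono n) (hn.trans_le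
    (mul_measure_le_gModular_div (hmono n) (haInc n) (hφ1 n) hc hL hu hl hla'.le)))

end Modular

theorem luxNorm_tendsto_linfty_general {N : ℕ} (Ω : Set (Fin N → ℝ)) (hΩ : volume Ω < ⊤)
    (φ : ℕ → (Fin N → ℝ) → ℝ → ℝ≥0∞) (hφ : ∀ n, IsWeakPhi Ω (φ n))
    (c L : ℝ) (hc : 1 ≤ c) (hL : 1 ≤ L) (p : ℕ → ℝ)
    (hptop : Tendsto p atTop atTop)
    (hanch : ∀ n, ∀ᵐ x ∂(volume.restrict Ω),
      ENNReal.ofReal (1 / c) ≤ φ n x 1 ∧ φ n x 1 ≤ ENNReal.ofReal c)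
    (haInc : ∀ n, ∀ᵐ x ∂(volume.restrict Ω), ∀ t, 0 ≤ t → ∀ l, 0 ≤ l → l ≤ 1 →
      φ n x (l * t) ≤ ENNReal.ofReal (L * l ^ p n) * φ n x t)
    (u : (Fin N → ℝ) → ℝ) (hu : Measurable u) :
    Tendsto (fun n => luxNorm Ω (φ n) u) atTop
      (nhds (eLpNorm u ⊤ (volume.restrict Ω))) := by
  have hmono n : ∀ᵐ x ∂volume.restrict Ω, MonotoneOn (φ n x) (Ici 0) :=
    (hφ n).2.1.mono fun _ hx => hx.2.2.2
  refine tendsto_order.2 ⟨fun b hb => ?_, fun b hb => ?_⟩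
  · exact eventually_lt_luxNorm hmono (by linarith) (by linarith) hptop haInc
      (fun n => (hanch n).mono fun _ hx => hx.1) hu hb
  · exact eventually_luxNorm_lt hΩ (by linarith) hptop haInc
      (fun n => (hanch n).mono fun _ hx => hx.2) hb

/-- If `|Ω| < ∞`, `φ_n ∈ Φ_w(Ω)`, `1/c ≤ φ_n(x,1) ≤ c` a.e., each `φ_n`
satisfies `(aInc)_{p_n}` with a uniform constant `L`, and `p_n → ∞`, then for every
`u ∈ L^∞(Ω)` one has `lim_n ‖u‖_{φ_n} = ‖u‖_{L^∞(Ω)}`. -/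
theorem luxNorm_tendsto_linfty {N : ℕ} (Ω : Set (Fin N → ℝ)) (hΩ : volume Ω < ⊤)
    (φ : ℕ → (Fin N → ℝ) → ℝ → ℝ≥0∞) (hφ : ∀ n, IsWeakPhi Ω (φ n))
    (c L : ℝ) (hc : 1 ≤ c) (hL : 1 ≤ L) (p : ℕ → ℝ) (hp : ∀ n, 1 ≤ p n)
    (hptop : Tendsto p atTop atTop)
    (hanch : ∀ n, ∀ᵐ x ∂(volume.restrict Ω),
      ENNReal.ofReal (1 / c) ≤ φ n x 1 ∧ φ n x 1 ≤ ENNReal.ofReal c)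
    (haInc : ∀ n, ∀ᵐ x ∂(volume.restrict Ω), ∀ t, 0 ≤ t → ∀ l, 0 ≤ l → l ≤ 1 →
      φ n x (l * t) ≤ ENNReal.ofReal (L * l ^ p n) * φ n x t)
    (u : (Fin N → ℝ) → ℝ) (hu : Measurable u)
    (huL : eLpNorm u ⊤ (volume.restrict Ω) < ⊤) :
    Tendsto (fun n => luxNorm Ω (φ n) u) atTop
      (nhds (eLpNorm u ⊤ (volume.restrict Ω))) :=
  luxNorm_tendsto_linfty_general Ω hΩ φ hφ c L hc hL p hptop hanch haInc u hu
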